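/- Let F : M_n(ℂ) → M_n(ℂ) be any map and ε ∈ ℝ, and let Φ denote the leapfrog MD step with force F and step size ε. Then Φ is exactly reversible: if Φ(U, π) = (U', π'), then Φ(U', −π') = (U, −π). Moreover, the half-step momentum π̃½ of the reversed step equals −exp(εA)·π½·exp(−εA), where π½ is the half-step momentum of the forward step and A = π½ − π½ᴴ. -/

import Mathlib

/-! Write `πh = π − ε·F(U)` and `A = πh − πhᴴ`. The rotated momentum `exp(εA)·πh·exp(−εA)`
has the same skew part `A` as `πh`, since `exp(εA)` is unitary and commutes with `A`. So the
reversed step, whose half-step momentum is the negated rotated momentum, sees the skew part `−A`: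
it rotates back by `exp(−εA)`, and its drift `exp(−εA)·(exp(εA)·exp(−ε·πhᴴ)·exp(−εA))` undoes
the forward drift `exp(εA)·exp(ε·πhᴴ)`. -/

open Matrix

attribute [local instance] Matrix.frobeniusNormedAddCommGroup Matrix.frobeniusNormedSpace

/-- The leapfrog MD step with force `F` and step size `ε`:
`πh := π − ε·F(U)`, `A := πh − πhᴴ`, `U' := exp(εA)·exp(ε·πhᴴ)·U`,
`π' := exp(εA)·πh·exp(−εA) − ε·F(U')`. -/
noncomputable def leapfrog {n : ℕ} (F : Matrix (Fin n) (Fin n) ℂ → Matrix (Fin n) (Fin n) ℂ)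
    (ε : ℝ) (p : Matrix (Fin n) (Fin n) ℂ × Matrix (Fin n) (Fin n) ℂ) :
    Matrix (Fin n) (Fin n) ℂ × Matrix (Fin n) (Fin n) ℂ :=
  let πh := p.2 - ε • F p.1
  let A := πh - πhᴴ
  let U' := NormedSpace.exp (ε • A) * NormedSpace.exp (ε • πhᴴ) * p.1
  (U', NormedSpace.exp (ε • A) * πh * NormedSpace.exp (-(ε • A)) - ε • F U')

open NormedSpace hiding exp_neg

namespace Matrix

variable {m 𝕂 : Type*} [Fintype m] [DecidableEq m] [RCLike 𝕂]

theorem exp_neg_mul_exp (X : Matrix m m 𝕂) : exp (-X) * exp X = 1 := by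
  rw [← exp_add_of_commute _ _ (Commute.refl X).neg_left, neg_add_cancel, exp_zero]

theorem exp_mul_exp_neg (X : Matrix m m 𝕂) : exp X * exp (-X) = 1 := by
  simpa using exp_neg_mul_exp (-X)

omit [Fintype m] [DecidableEq m] in
theorem conjTranspose_smul_sub_conjTranspose (ε : ℝ) (P : Matrix m m 𝕂) :
    (ε • (P - Pᴴ))ᴴ = -(ε • (P - Pᴴ)) := by
  rw [conjTranspose_smul, conjTranspose_sub, conjTranspose_conjTranspose, star_trivial,
    ← smul_neg, neg_sub]

end Matrix

namespace Leapfrog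

variable {m 𝕂 : Type*} [Fintype m] [DecidableEq m] [RCLike 𝕂]

noncomputable def drift (ε : ℝ) (P U : Matrix m m 𝕂) : Matrix m m 𝕂 :=
  exp (ε • (P - Pᴴ)) * exp (ε • Pᴴ) * U

noncomputable def rotate (ε : ℝ) (P : Matrix m m 𝕂) : Matrix m m 𝕂 :=
  exp (ε • (P - Pᴴ)) * P * exp (-(ε • (P - Pᴴ)))

theorem leapfrog_eq {n : ℕ} (F : Matrix (Fin n) (Fin n) ℂ → Matrix (Fin n) (Fin n) ℂ) (ε : ℝ)
    (U π : Matrix (Fin n) (Fin n) ℂ) :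
    leapfrog F ε (U, π) =
      (drift ε (π - ε • F U) U,
        rotate ε (π - ε • F U) - ε • F (drift ε (π - ε • F U) U)) :=
  rfl

theorem conjTranspose_exp_smul_sub_conjTranspose (ε : ℝ) (P : Matrix m m 𝕂) :
    (exp (ε • (P - Pᴴ)))ᴴ = exp (-(ε • (P - Pᴴ))) := by
  rw [← exp_conjTranspose, conjTranspose_smul_sub_conjTranspose]

theorem conjTranspose_exp_neg_smul_sub_conjTranspose (ε : ℝ) (P : Matrix m m 𝕂) :
    (exp (-(ε • (P - Pᴴ))))ᴴ = exp (ε • (P - Pᴴ)) := by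
  rw [← conjTranspose_exp_smul_sub_conjTranspose, conjTranspose_conjTranspose]

theorem conjTranspose_rotate (ε : ℝ) (P : Matrix m m 𝕂) :
    (rotate ε P)ᴴ = exp (ε • (P - Pᴴ)) * Pᴴ * exp (-(ε • (P - Pᴴ))) := by
  rw [rotate, conjTranspose_mul, conjTranspose_mul, conjTranspose_exp_smul_sub_conjTranspose,
    conjTranspose_exp_neg_smul_sub_conjTranspose, mul_assoc]

theorem rotate_sub_conjTranspose (ε : ℝ) (P : Matrix m m 𝕂) :
    rotate ε P - (rotate ε P)ᴴ = P - Pᴴ := by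
  have hcomm : Commute (exp (ε • (P - Pᴴ))) (P - Pᴴ) :=
    ((Commute.refl (P - Pᴴ)).smul_left ε).exp_left
  rw [conjTranspose_rotate, rotate, ← sub_mul, ← mul_sub, hcomm.eq, mul_assoc,
    exp_mul_exp_neg, mul_one]

theorem smul_neg_rotate_sub_conjTranspose (ε : ℝ) (P : Matrix m m 𝕂) :
    ε • (-rotate ε P - (-rotate ε P)ᴴ) = -(ε • (P - Pᴴ)) := by
  rw [conjTranspose_neg, neg_sub_neg, ← neg_sub, rotate_sub_conjTranspose, smul_neg]

theorem rotate_neg_rotate (ε : ℝ) (P : Matrix m m 𝕂) : rotate ε (-rotate ε P) = -P := by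
  set E := exp (ε • (P - Pᴴ))
  set E' := exp (-(ε • (P - Pᴴ)))
  calc rotate ε (-rotate ε P) = E' * -(E * P * E') * E := by
        rw [rotate, smul_neg_rotate_sub_conjTranspose, neg_neg, rotate]
    _ = -(E' * E * P * (E' * E)) := by noncomm_ring
    _ = -P := by rw [exp_neg_mul_exp, one_mul, mul_one]

theorem exp_smul_conjTranspose_neg_rotate (ε : ℝ) (P : Matrix m m 𝕂) :
    exp (ε • (-rotate ε P)ᴴ) =
      exp (ε • (P - Pᴴ)) * exp (-(ε • Pᴴ)) * exp (-(ε • (P - Pᴴ))) := by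
  have hconj : ε • (-rotate ε P)ᴴ =
      exp (ε • (P - Pᴴ)) * -(ε • Pᴴ) * (exp (ε • (P - Pᴴ)))⁻¹ := by
    rw [conjTranspose_neg, conjTranspose_rotate, Matrix.exp_neg, mul_neg, neg_mul,
      Matrix.mul_smul, Matrix.smul_mul, smul_neg]
  rw [hconj, exp_conj _ _ (isUnit_exp _), ← Matrix.exp_neg]

theorem drift_neg_rotate_drift (ε : ℝ) (P U : Matrix m m 𝕂) :
    drift ε (-rotate ε P) (drift ε P U) = U := by
  set E := exp (ε • (P - Pᴴ))
  set E' := exp (-(ε • (P - Pᴴ)))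
  calc drift ε (-rotate ε P) (drift ε P U)
        = E' * (E * exp (-(ε • Pᴴ)) * E') * (E * exp (ε • Pᴴ) * U) := by
          rw [drift, smul_neg_rotate_sub_conjTranspose, exp_smul_conjTranspose_neg_rotate, drift]
      _ = E' * E * exp (-(ε • Pᴴ)) * (E' * E) * exp (ε • Pᴴ) * U := by noncomm_ring
      _ = U := by rw [exp_neg_mul_exp, one_mul, mul_one, exp_neg_mul_exp, one_mul]

end Leapfrog

open Leapfrog

theorem leapfrog_reversible_general {n : ℕ}
    (F : Matrix (Fin n) (Fin n) ℂ → Matrix (Fin n) (Fin n) ℂ) (ε : ℝ)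
    (U π U' π' : Matrix (Fin n) (Fin n) ℂ)
    (h : leapfrog F ε (U, π) = (U', π')) :
    leapfrog F ε (U', -π') = (U, -π) ∧
    (-π') - ε • F U' =
      -(NormedSpace.exp (ε • ((π - ε • F U) - (π - ε • F U)ᴴ)) * (π - ε • F U) *
        NormedSpace.exp (-(ε • ((π - ε • F U) - (π - ε • F U)ᴴ)))) := by
  rw [leapfrog_eq, Prod.mk.injEq] at h
  obtain ⟨rfl, rfl⟩ := h
  set P := π - ε • F U
  have hreversed :
      -(rotate ε P - ε • F (drift ε P U)) - ε • F (drift ε P U) = -rotate ε P := by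
    abel
  refine ⟨?_, hreversed⟩
  rw [leapfrog_eq, hreversed, drift_neg_rotate_drift, rotate_neg_rotate, neg_sub',
    sub_neg_eq_add, add_sub_cancel_right]

/-- The leapfrog MD step is exactly reversible: if `Φ(U, π) = (U', π')`
then `Φ(U', −π') = (U, −π)`, and the half-step momentum of the reversed step equals
`−exp(εA)·πh·exp(−εA)` with `πh = π − ε·F(U)`, `A = πh − πhᴴ`. -/
theorem leapfrog_reversible {n : ℕ} [NeZero n]
    (F : Matrix (Fin n) (Fin n) ℂ → Matrix (Fin n) (Fin n) ℂ) (ε : ℝ)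
    (U π U' π' : Matrix (Fin n) (Fin n) ℂ)
    (h : leapfrog F ε (U, π) = (U', π')) :
    leapfrog F ε (U', -π') = (U, -π) ∧
    (-π') - ε • F U' =
      -(NormedSpace.exp (ε • ((π - ε • F U) - (π - ε • F U)ᴴ)) * (π - ε • F U) *
        NormedSpace.exp (-(ε • ((π - ε • F U) - (π - ε • F U)ᴴ)))) :=
  leapfrog_reversible_general F ε U π U' π' h
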